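/- For n ≥ 3, the mutual-visibility number of L(K_n) equals the number of edges of the Turán graph T(n,3), i.e., μ(L(K_n)) = e(T(n,3)). -/

import Mathlib

namespace MutualVisibility

open SimpleGraph

variable {V W : Type*}

/-- `x` and `y` are `X`-visible in `G`: there is a shortest `x,y`-path all of whose
internal vertices avoid `X`. -/
def Visible (G : SimpleGraph V) (X : Set V) (x y : V) : Prop :=
  ∃ p : G.Walk x y, p.length = G.dist x y ∧ ∀ v ∈ p.support, v ≠ x → v ≠ y → v ∉ X

/-- `X` is a mutual-visibility set: any two vertices of `X` are `X`-visible. -/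
def IsMutualVisSet (G : SimpleGraph V) (X : Set V) : Prop :=
  ∀ x ∈ X, ∀ y ∈ X, Visible G X x y

/-- outer mutual-visibility set -/
def IsOuterMutualVisSet (G : SimpleGraph V) (X : Set V) : Prop :=
  IsMutualVisSet G X ∧ ∀ x ∈ X, ∀ y ∉ X, Visible G X x y

/-- dual mutual-visibility set -/
def IsDualMutualVisSet (G : SimpleGraph V) (X : Set V) : Prop :=
  IsMutualVisSet G X ∧ ∀ x ∉ X, ∀ y ∉ X, Visible G X x y

/-- total mutual-visibility set -/
def IsTotalMutualVisSet (G : SimpleGraph V) (X : Set V) : Prop :=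
  ∀ x y : V, Visible G X x y

/-- mutual-visibility number μ(G) -/
noncomputable def mu (G : SimpleGraph V) : ℕ :=
  sSup {k | ∃ X : Set V, IsMutualVisSet G X ∧ X.ncard = k}

/-- outer mutual-visibility number μ_o(G) -/
noncomputable def muOuter (G : SimpleGraph V) : ℕ :=
  sSup {k | ∃ X : Set V, IsOuterMutualVisSet G X ∧ X.ncard = k}

/-- dual mutual-visibility number μ_d(G) -/
noncomputable def muDual (G : SimpleGraph V) : ℕ :=
  sSup {k | ∃ X : Set V, IsDualMutualVisSet G X ∧ X.ncard = k}

/-- total mutual-visibility number μ_t(G) -/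
noncomputable def muTotal (G : SimpleGraph V) : ℕ :=
  sSup {k | ∃ X : Set V, IsTotalMutualVisSet G X ∧ X.ncard = k}

/-- `H` contains a subgraph copy of `F`. -/
def ContainsCopy (F : SimpleGraph W) (H : SimpleGraph V) : Prop :=
  ∃ f : W → V, Function.Injective f ∧ ∀ a b, F.Adj a b → H.Adj (f a) (f b)

/-- The Turán number ex(n; F): max number of edges of an `n`-vertex graph with no copy of `F`. -/
noncomputable def exNum (n : ℕ) (F : SimpleGraph W) : ℕ :=
  sSup {k | ∃ H : SimpleGraph (Fin n), ¬ ContainsCopy F H ∧ H.edgeSet.ncard = k}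

/-- The direct (tensor/categorical) product of graphs. -/
def directProd (G : SimpleGraph V) (H : SimpleGraph W) : SimpleGraph (V × W) where
  Adj x y := G.Adj x.1 y.1 ∧ H.Adj x.2 y.2
  symm := ⟨fun _ _ h => ⟨h.1.symm, h.2.symm⟩⟩
  loopless := ⟨fun x h => G.loopless.irrefl x.1 h.1⟩

/-- The join `G + H` of two graphs. -/
def graphJoin (G : SimpleGraph V) (H : SimpleGraph W) : SimpleGraph (V ⊕ W) where
  Adj u v := match u, v with
    | Sum.inl a, Sum.inl b => G.Adj a b
    | Sum.inr a, Sum.inr b => H.Adj a b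
    | _, _ => True
  symm := ⟨fun u v => match u, v with
    | Sum.inl _, Sum.inl _ => fun h => G.symm.symm _ _ h
    | Sum.inr _, Sum.inr _ => fun h => H.symm.symm _ _ h
    | Sum.inl _, Sum.inr _ => fun _ => trivial
    | Sum.inr _, Sum.inl _ => fun _ => trivial⟩
  loopless := ⟨fun u => match u with
    | Sum.inl a => G.loopless.irrefl a
    | Sum.inr a => H.loopless.irrefl a⟩

/-- A big-μ graph: `G = (K_1 ∪ K_t) + H` for some `t ≥ 0` and some graph `H`. -/
def IsBigMu {V : Type} (G : SimpleGraph V) : Prop :=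
  ∃ (t : ℕ) (W : Type) (H : SimpleGraph W),
    Nonempty (G ≃g graphJoin ((⊤ : SimpleGraph (Fin 1)) ⊕g (⊤ : SimpleGraph (Fin t))) H)

/-- A cograph: a graph with no induced path on four vertices. -/
def IsCograph (G : SimpleGraph V) : Prop :=
  ¬ ∃ f : Fin 4 → V, Function.Injective f ∧
      ∀ a b, (pathGraph 4).Adj a b ↔ G.Adj (f a) (f b)

/-- The Petersen graph, realized as the Kneser graph K(5,2). -/
def petersen : SimpleGraph {s : Finset (Fin 5) // s.card = 2} where
  Adj a b := Disjoint a.1 b.1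
  symm := ⟨fun _ _ h => h.symm⟩
  loopless := by
    constructor
    rintro ⟨s, hs⟩ h
    rw [disjoint_self, Finset.bot_eq_empty] at h
    subst h
    simp at hs

/-!
A set of vertices of `L(K_n)` is the edge set of a graph `H` on `n` vertices. Two disjoint edges
`ab`, `cd` of `K_n` are at distance two in `L(K_n)`, and their common neighbours are exactly the
four edges `uw` with `u ∈ {a, b}`, `w ∈ {c, d}`; edges meeting in a vertex are adjacent. So the edge
set of `H` is a mutual-visibility set iff every two disjoint edges of `H` span a non-edge of `H`,
i.e. iff `H` is `K_4`-free, and `μ(L(K_n))` is the Turán number `ex(n, K_4) = e(T(n, 3))`.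
-/

section Visibility

variable {G : SimpleGraph V} {X : Set V} {x y z : V}

lemma visible_self (G : SimpleGraph V) (X : Set V) (x : V) : Visible G X x x :=
  ⟨Walk.nil, by simp, by simp⟩

lemma visible_of_adj (h : G.Adj x y) : Visible G X x y := by
  refine ⟨h.toWalk, by simp [dist_eq_one_iff_adj.2 h], ?_⟩
  simp +contextual

lemma dist_eq_two_of_adj_of_adj (hne : x ≠ y) (hxy : ¬ G.Adj x y) (hxz : G.Adj x z)
    (hzy : G.Adj z y) : G.dist x y = 2 := by
  have hle : G.dist x y ≤ 2 := by simpa using dist_le (.cons hxz (.cons hzy .nil))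
  have h0 : G.dist x y ≠ 0 := by
    rwa [ne_eq, Reachable.dist_eq_zero_iff ⟨.cons hxz (.cons hzy .nil)⟩]
  have h1 : G.dist x y ≠ 1 := fun h => hxy (dist_eq_one_iff_adj.1 h)
  omega

lemma visible_iff_exists_of_dist_eq_two (hd : G.dist x y = 2) :
    Visible G X x y ↔ ∃ z, G.Adj x z ∧ G.Adj z y ∧ z ∉ X := by
  constructor
  · rintro ⟨p, hlen, hsupp⟩
    rw [hd] at hlen
    match p, hlen with
    | .cons (v := z) hxz (.cons hzy .nil), _ =>
      exact ⟨z, hxz, hzy, hsupp z (by simp) hxz.ne' hzy.ne⟩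
  · rintro ⟨z, hxz, hzy, hz⟩
    refine ⟨.cons hxz (.cons hzy .nil), by simp [hd], ?_⟩
    simp only [Walk.support_cons, Walk.support_nil, List.mem_cons, List.not_mem_nil, or_false]
    rintro v (rfl | rfl | rfl) hvx hvy
    exacts [absurd rfl hvx, hz, absurd rfl hvy]

end Visibility

theorem cliqueFree_four_iff {H : SimpleGraph V} :
    H.CliqueFree 4 ↔ ∀ e ∈ H.edgeSet, ∀ f ∈ H.edgeSet, ∃ u ∈ e, ∃ w ∈ f, ¬ H.Adj u w := by
  classical
  constructor
  · intro hH e he f hf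
    induction e using Sym2.ind with | _ a b => ?_
    induction f using Sym2.ind with | _ c d => ?_
    by_contra! hcross
    simp only [Sym2.mem_iff, forall_eq_or_imp, forall_eq] at hcross
    obtain ⟨⟨hac, had⟩, hbc, hbd⟩ := hcross
    refine hH {a, b, c, d} ((is3Clique_triple_iff.2 ⟨hbc, hbd, hf⟩).insert ?_)
    simpa using ⟨he, hac, had⟩
  · intro hH
    refine cliqueFree_iff.2 ⟨fun F => ?_⟩
    have hF (i j : Fin 4) (h : i ≠ j) : H.Adj (F i) (F j) := F.toHom.map_adj h
    obtain ⟨u, hu, w, hw, huw⟩ :=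
      hH s(F 0, F 1) (hF 0 1 (by decide)) s(F 2, F 3) (hF 2 3 (by decide))
    simp only [Sym2.mem_iff] at hu hw
    rcases hu with rfl | rfl <;> rcases hw with rfl | rfl <;> exact huw (hF _ _ (by decide))

lemma lineGraph_adj_and_adj_iff {G : SimpleGraph V} {e f g : G.edgeSet}
    (hef : ∀ v ∈ (e : Sym2 V), v ∉ (f : Sym2 V)) :
    G.lineGraph.Adj e g ∧ G.lineGraph.Adj g f ↔
      ∃ u ∈ (e : Sym2 V), ∃ w ∈ (f : Sym2 V), (g : Sym2 V) = s(u, w) := by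
  constructor
  · rintro ⟨heg, hgf⟩
    obtain ⟨-, u, hue, hug⟩ := lineGraph_adj_iff_exists.1 heg
    obtain ⟨-, w, hwg, hwf⟩ := lineGraph_adj_iff_exists.1 hgf
    have huw : u ≠ w := by rintro rfl; exact hef u hue hwf
    exact ⟨u, hue, w, hwf, (Sym2.mem_and_mem_iff huw).1 ⟨hug, hwg⟩⟩
  · rintro ⟨u, hue, w, hwf, hg⟩
    refine ⟨lineGraph_adj_iff_exists.2 ⟨?_, u, hue, by simp [hg]⟩,
      lineGraph_adj_iff_exists.2 ⟨?_, w, by simp [hg], hwf⟩⟩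
    · rintro rfl; exact hef w (by simp [hg]) hwf
    · rintro rfl; exact hef u hue (by simp [hg])

theorem visible_lineGraph_top_iff {H : SimpleGraph V} {e f : (⊤ : SimpleGraph V).edgeSet} :
    Visible (⊤ : SimpleGraph V).lineGraph (Subtype.val ⁻¹' H.edgeSet) e f ↔
      ∃ u ∈ (e : Sym2 V), ∃ w ∈ (f : Sym2 V), ¬ H.Adj u w := by
  by_cases hmeet : ∃ v ∈ (e : Sym2 V), v ∈ (f : Sym2 V)
  · -- `e` and `f` are equal or adjacent, and `u = w = v` works on the right since `H` is loopless.
    obtain ⟨v, hve, hvf⟩ := hmeet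
    refine iff_of_true ?_ ⟨v, hve, v, hvf, H.loopless.irrefl v⟩
    by_cases hef : e = f
    · exact hef ▸ visible_self _ _ e
    · exact visible_of_adj (lineGraph_adj_iff_exists.2 ⟨hef, v, hve, hvf⟩)
  push Not at hmeet
  have hne {u w : V} (hu : u ∈ (e : Sym2 V)) (hw : w ∈ (f : Sym2 V)) : u ≠ w :=
    (ne_of_mem_of_not_mem hw (hmeet u hu)).symm
  have ha := (e : Sym2 V).out_fst_mem
  have hc := (f : Sym2 V).out_fst_mem
  have hmid := (lineGraph_adj_and_adj_iff (g := ⟨_, by simpa using hne ha hc⟩)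
    hmeet).2 ⟨_, ha, _, hc, rfl⟩
  have hd : (⊤ : SimpleGraph V).lineGraph.dist e f = 2 :=
    dist_eq_two_of_adj_of_adj (by rintro rfl; exact hmeet _ ha ha)
      (fun h => by
        obtain ⟨-, v, hve, hvf⟩ := lineGraph_adj_iff_exists.1 h
        exact hmeet v hve hvf) hmid.1 hmid.2
  rw [visible_iff_exists_of_dist_eq_two hd]
  constructor
  · rintro ⟨g, heg, hgf, hg⟩
    obtain ⟨u, hu, w, hw, hgv⟩ := (lineGraph_adj_and_adj_iff hmeet).1 ⟨heg, hgf⟩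
    exact ⟨u, hu, w, hw, by rwa [Set.mem_preimage, hgv, mem_edgeSet] at hg⟩
  · rintro ⟨u, hu, w, hw, huw⟩
    have hadj := (lineGraph_adj_and_adj_iff (g := ⟨s(u, w), by simpa using hne hu hw⟩)
      hmeet).2 ⟨u, hu, w, hw, rfl⟩
    exact ⟨_, hadj.1, hadj.2, huw⟩

theorem isMutualVisSet_lineGraph_top_iff {H : SimpleGraph V} :
    IsMutualVisSet (⊤ : SimpleGraph V).lineGraph (Subtype.val ⁻¹' H.edgeSet) ↔
      H.CliqueFree 4 := by
  simp only [IsMutualVisSet, visible_lineGraph_top_iff, cliqueFree_four_iff]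
  refine ⟨fun h e he f hf => h ⟨e, edgeSet_mono le_top he⟩ he ⟨f, edgeSet_mono le_top hf⟩ hf,
    fun h e he f hf => h e he f hf⟩

lemma preimage_edgeSet_fromEdgeSet_image {G : SimpleGraph V} (X : Set G.edgeSet) :
    Subtype.val ⁻¹' (fromEdgeSet (Subtype.val '' X)).edgeSet = X := by
  ext e
  simp [edgeSet_fromEdgeSet, G.not_isDiag_of_mem_edgeSet e.2]

lemma ncard_preimage_edgeSet {G H : SimpleGraph V} (hHG : H ≤ G) :
    (Subtype.val ⁻¹' H.edgeSet : Set G.edgeSet).ncard = H.edgeSet.ncard :=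
  Set.ncard_preimage_of_injective_subset_range Subtype.val_injective
    (by simpa using edgeSet_mono hHG)

theorem mu_lineGraph_top_eq_sSup :
    mu (⊤ : SimpleGraph V).lineGraph =
      sSup {k | ∃ H : SimpleGraph V, H.CliqueFree 4 ∧ H.edgeSet.ncard = k} := by
  unfold mu
  congr 1
  ext k
  constructor
  · rintro ⟨X, hX, rfl⟩
    rw [← preimage_edgeSet_fromEdgeSet_image X] at hX ⊢
    exact ⟨_, isMutualVisSet_lineGraph_top_iff.1 hX, (ncard_preimage_edgeSet le_top).symm⟩
  · rintro ⟨H, hH, rfl⟩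
    exact ⟨_, isMutualVisSet_lineGraph_top_iff.2 hH, ncard_preimage_edgeSet le_top⟩

theorem isGreatest_ncard_edgeSet_cliqueFree {n r : ℕ} (hr : 0 < r) :
    IsGreatest {k | ∃ H : SimpleGraph (Fin n), H.CliqueFree (r + 1) ∧ H.edgeSet.ncard = k}
      (turanGraph n r).edgeSet.ncard := by
  classical
  refine ⟨⟨_, turanGraph_cliqueFree hr, rfl⟩, ?_⟩
  rintro _ ⟨H, hH, rfl⟩
  simpa [Set.ncard_eq_toFinset_card', edgeFinset] using (isTuranMaximal_turanGraph hr).2 hH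

theorem mu_lineGraph_complete_eq_turan_general (n : ℕ) :
    mu (⊤ : SimpleGraph (Fin n)).lineGraph = (turanGraph n 3).edgeSet.ncard := by
  rw [mu_lineGraph_top_eq_sSup,
    (isGreatest_ncard_edgeSet_cliqueFree (r := 3) (by norm_num)).csSup_eq]

theorem mu_lineGraph_complete_eq_turan (n : ℕ) (hn : 3 ≤ n) :
    mu (⊤ : SimpleGraph (Fin n)).lineGraph = (turanGraph n 3).edgeSet.ncard :=
  mu_lineGraph_complete_eq_turan_general n
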